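/- Let ρ be a C² real-valued function on an open set U ⊆ ℂⁿ, let b = {ρ = 0} with dρ ≠ 0 on b, and suppose the complex Hessian of ρ is positive semidefinite on complex tangent vectors at points of b (pseudoconvexity). Let K ⊆ b be compact, m ≤ n, and suppose for every q ∈ K and every unit vector u in the null space of the Levi form at q (i.e., u complex tangent at q with ∑ ρ_{jk̄}(q)uⱼūₖ = 0) one has ∑_{s=1}^m |u_s|² ≥ 1/2. Then for every M > 0 there exists A > 0 such that for all q ∈ K and all complex tangent unit vectors u at q: M∑_{s=1}^m |u_s|² + A∑_{j,k} ρ_{jk̄}(q)uⱼūₖ ≥ M/3. -/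

import Mathlib

open Filter Topology

/-- The complex Hessian `∑_{j,k} f_{jk̄}(q) uⱼūₖ = (1/4)(D²f(u,u) + D²f(iu,iu))`. -/
noncomputable def hessC {E : Type*} [NormedAddCommGroup E] [NormedSpace ℂ E]
    (f : E → ℝ) (q u : E) : ℝ :=
  (1 / 4) * (iteratedFDeriv ℝ 2 f q ![u, u] +
    iteratedFDeriv ℝ 2 f q ![Complex.I • u, Complex.I • u])

/-- The `(1,0)`-part of the differential: `∑ⱼ f_{zⱼ}(q) uⱼ = (1/2)(df(u) - i·df(iu))`. -/
noncomputable def wirt {E : Type*} [NormedAddCommGroup E] [NormedSpace ℂ E]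
    (f : E → ℝ) (q u : E) : ℂ :=
  (1 / 2) * ((fderiv ℝ f q u : ℂ) - Complex.I * (fderiv ℝ f q (Complex.I • u) : ℂ))

/-- Key compactness estimate in the proof of Theorem 2.3: if on the compact set
`K` of boundary points every unit Levi-null vector `u` satisfies
`∑_{s<m} |u_s|² ≥ 1/2`, then for every `M > 0` there is `A > 0` with
`M ∑_{s<m} |u_s|² + A ∑_{j,k} ρ_{jk̄}(q) uⱼūₖ ≥ M/3` for all `q ∈ K` and all
complex tangent unit vectors `u` at `q`. -/
theorem stmt11 {n m : ℕ} (hm : m ≤ n)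
    (U : Set (EuclideanSpace ℂ (Fin n))) (hU : IsOpen U)
    (ρ : EuclideanSpace ℂ (Fin n) → ℝ) (hρ : ContDiffOn ℝ 2 ρ U)
    (hgrad : ∀ q ∈ U, ρ q = 0 → fderiv ℝ ρ q ≠ 0)
    (hpsc : ∀ q ∈ U, ρ q = 0 → ∀ u, wirt ρ q u = 0 → 0 ≤ hessC ρ q u)
    (K : Set (EuclideanSpace ℂ (Fin n))) (hK : IsCompact K)
    (hKb : K ⊆ {q ∈ U | ρ q = 0})
    (hnull : ∀ q ∈ K, ∀ u : EuclideanSpace ℂ (Fin n), ‖u‖ = 1 →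
      wirt ρ q u = 0 → hessC ρ q u = 0 →
      (1 / 2 : ℝ) ≤ ∑ s ∈ Finset.univ.filter (fun s : Fin n => (s : ℕ) < m),
        ‖u s‖ ^ 2) :
    ∀ M > (0 : ℝ), ∃ A > (0 : ℝ), ∀ q ∈ K,
      ∀ u : EuclideanSpace ℂ (Fin n), ‖u‖ = 1 → wirt ρ q u = 0 →
      M / 3 ≤ M * (∑ s ∈ Finset.univ.filter (fun s : Fin n => (s : ℕ) < m),
          ‖u s‖ ^ 2) + A * hessC ρ q u := by
  intro M hM
  by_contra hcon
  push_neg at hcon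
  set F : Finset (Fin n) := Finset.univ.filter (fun s : Fin n => (s : ℕ) < m) with hF
  have hseq : ∀ l : ℕ, ∃ q ∈ K, ∃ u : EuclideanSpace ℂ (Fin n), ‖u‖ = 1 ∧
      wirt ρ q u = 0 ∧
      M * (∑ s ∈ F, ‖u s‖ ^ 2) + ((l : ℝ) + 1) * hessC ρ q u < M / 3 :=
    fun l => hcon ((l : ℝ) + 1) (by positivity)
  choose q hqK u hu hw hlt using hseq
  have hpos : ∀ l, 0 ≤ hessC ρ (q l) (u l) :=
    fun l => hpsc _ (hKb (hqK l)).1 (hKb (hqK l)).2 _ (hw l)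
  have hSnn : ∀ l, 0 ≤ ∑ s ∈ F, ‖u l s‖ ^ 2 :=
    fun l => Finset.sum_nonneg fun s _ => sq_nonneg _
  -- compactness
  have hC : IsCompact (K ×ˢ Metric.sphere (0 : EuclideanSpace ℂ (Fin n)) 1) :=
    hK.prod (isCompact_sphere 0 1)
  have hmem : ∀ l, (q l, u l) ∈ K ×ˢ Metric.sphere (0 : EuclideanSpace ℂ (Fin n)) 1 :=
    fun l => ⟨hqK l, by simpa [mem_sphere_zero_iff_norm] using hu l⟩
  obtain ⟨⟨q₀, u₀⟩, hmem₀, φ, hφ, htend⟩ := hC.tendsto_subseq hmem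
  have hq₀K : q₀ ∈ K := hmem₀.1
  have hu₀ : ‖u₀‖ = 1 := by simpa [mem_sphere_zero_iff_norm] using hmem₀.2
  have hq₀U : q₀ ∈ U := (hKb hq₀K).1
  have hqt : Tendsto (fun l => q (φ l)) atTop (𝓝 q₀) :=
    (continuous_fst.tendsto _).comp htend
  have hut : Tendsto (fun l => u (φ l)) atTop (𝓝 u₀) :=
    (continuous_snd.tendsto _).comp htend
  -- continuity of the second derivative
  have hiter : ContinuousOn (iteratedFDeriv ℝ 2 ρ) U :=
    (hρ.continuousOn_iteratedFDerivWithin (by exact_mod_cast le_rfl)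
      hU.uniqueDiffOn).congr (iteratedFDerivWithin_of_isOpen 2 hU).symm
  have hFt : Tendsto (fun l => iteratedFDeriv ℝ 2 ρ (q (φ l))) atTop
      (𝓝 (iteratedFDeriv ℝ 2 ρ q₀)) :=
    ((hiter.continuousAt (hU.mem_nhds hq₀U)).tendsto).comp hqt
  have hvt : Tendsto (fun l => (![u (φ l), u (φ l)] : Fin 2 → _)) atTop (𝓝 ![u₀, u₀]) := by
    rw [tendsto_pi_nhds]; intro i; fin_cases i <;> simpa using hut
  have hutI : Tendsto (fun l => Complex.I • u (φ l)) atTop (𝓝 (Complex.I • u₀)) :=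
    hut.const_smul Complex.I
  have hvtI : Tendsto (fun l => (![Complex.I • u (φ l), Complex.I • u (φ l)] : Fin 2 → _))
      atTop (𝓝 ![Complex.I • u₀, Complex.I • u₀]) := by
    rw [tendsto_pi_nhds]; intro i; fin_cases i <;> simpa using hutI
  have hev : Tendsto (fun l => iteratedFDeriv ℝ 2 ρ (q (φ l)) ![u (φ l), u (φ l)]) atTop
      (𝓝 (iteratedFDeriv ℝ 2 ρ q₀ ![u₀, u₀])) :=
    (continuous_eval.tendsto _).comp (hFt.prodMk_nhds hvt)
  have hevI : Tendsto (fun l => iteratedFDeriv ℝ 2 ρ (q (φ l))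
      ![Complex.I • u (φ l), Complex.I • u (φ l)]) atTop
      (𝓝 (iteratedFDeriv ℝ 2 ρ q₀ ![Complex.I • u₀, Complex.I • u₀])) :=
    (continuous_eval.tendsto _).comp (hFt.prodMk_nhds hvtI)
  have hhesst : Tendsto (fun l => hessC ρ (q (φ l)) (u (φ l))) atTop
      (𝓝 (hessC ρ q₀ u₀)) := by
    unfold hessC
    exact (hev.add hevI).const_mul _
  -- continuity of the first derivative and wirt
  have hfd : ContinuousOn (fderiv ℝ ρ) U :=
    hρ.continuousOn_fderiv_of_isOpen hU (by norm_num)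
  have hfdt : Tendsto (fun l => fderiv ℝ ρ (q (φ l))) atTop (𝓝 (fderiv ℝ ρ q₀)) :=
    ((hfd.continuousAt (hU.mem_nhds hq₀U)).tendsto).comp hqt
  have hw1 : Tendsto (fun l => fderiv ℝ ρ (q (φ l)) (u (φ l))) atTop
      (𝓝 (fderiv ℝ ρ q₀ u₀)) :=
    (isBoundedBilinearMap_apply.continuous.tendsto _).comp (hfdt.prodMk_nhds hut)
  have hw2 : Tendsto (fun l => fderiv ℝ ρ (q (φ l)) (Complex.I • u (φ l))) atTop
      (𝓝 (fderiv ℝ ρ q₀ (Complex.I • u₀))) :=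
    (isBoundedBilinearMap_apply.continuous.tendsto _).comp (hfdt.prodMk_nhds hutI)
  have hwt : Tendsto (fun l => wirt ρ (q (φ l)) (u (φ l))) atTop (𝓝 (wirt ρ q₀ u₀)) := by
    unfold wirt
    exact (((Complex.continuous_ofReal.tendsto _).comp hw1).sub
      (((Complex.continuous_ofReal.tendsto _).comp hw2).const_mul Complex.I)).const_mul _
  have hwz : wirt ρ q₀ u₀ = 0 := by
    refine tendsto_nhds_unique hwt ?_
    have : (fun l => wirt ρ (q (φ l)) (u (φ l))) = fun _ => (0 : ℂ) :=
      funext fun l => hw (φ l)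
    rw [this]; exact tendsto_const_nhds
  -- the Hessian vanishes in the limit
  have hbound : Tendsto (fun l : ℕ => M / 3 / ((φ l : ℝ) + 1)) atTop (𝓝 0) :=
    Tendsto.div_atTop tendsto_const_nhds
      (tendsto_atTop_add_const_right _ _
        (tendsto_natCast_atTop_atTop.comp hφ.tendsto_atTop))
  have hhz : hessC ρ q₀ u₀ = 0 := by
    refine tendsto_nhds_unique hhesst ?_
    refine squeeze_zero (fun l => hpos (φ l)) (fun l => ?_) hbound
    have h := hlt (φ l)
    have hc : (0 : ℝ) < (φ l : ℝ) + 1 := by positivity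
    have hs := hSnn (φ l)
    rw [le_div_iff₀ hc]
    nlinarith [hM]
  -- the coordinate sum in the limit
  have hSt : Tendsto (fun l => ∑ s ∈ F, ‖u (φ l) s‖ ^ 2) atTop
      (𝓝 (∑ s ∈ F, ‖u₀ s‖ ^ 2)) := by
    refine tendsto_finset_sum _ fun s _ => ?_
    exact ((continuous_norm.tendsto _).comp
      (((EuclideanSpace.proj s).continuous.tendsto _).comp hut)).pow 2
  have hS3 : (∑ s ∈ F, ‖u₀ s‖ ^ 2) ≤ 1 / 3 := by
    refine le_of_tendsto hSt (Eventually.of_forall fun l => ?_)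
    have h := hlt (φ l)
    have hc : (0 : ℝ) ≤ ((φ l : ℝ) + 1) * hessC ρ (q (φ l)) (u (φ l)) := by
      have := hpos (φ l); positivity
    nlinarith [hM]
  have := hnull q₀ hq₀K u₀ hu₀ hwz hhz
  linarith
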